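/- Let d ≥ 1, r > 0, and let V̂ : ℤ^d → ℝ satisfy V̂(k) = 0 for |k| > r, V̂(−k) = V̂(k), and V̂(0) = 0; write ‖V̂‖₁ = (2π)^{−d}·∑_{k∈ℤ^d}|V̂(k)|. There exists a constant C > 0, depending only on d, ‖V̂‖₁ and ∑_k V̂(k)², such that whenever λ > 0 satisfies λ·‖V̂‖₁ ≤ 1/2 and p_F ≥ 1, then for every bounded f : ℤ^d → ℝ and every t > 0: sup_{q∈ℤ^d} |B_t[f](q) − t·𝓑[f](q)| ≤ C·t·(1/t² + (λt)²)·p_F^{d−1}·(sup_p|1 − f(p)|)·(sup_p|f(p)|). -/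

import Mathlib

open Real

/-- The Euclidean norm of a lattice point in `ℤ^d`. -/
noncomputable def zNorm {d : ℕ} (p : Fin d → ℤ) : ℝ := Real.sqrt (∑ i, ((p i : ℝ)) ^ 2)

/-- The indicator `χ` of the Fermi ball of radius `p_F`. -/
noncomputable def chi {d : ℕ} (pF : ℝ) (p : Fin d → ℤ) : ℝ := if zNorm p ≤ pF then 1 else 0

/-- The indicator `χ^⊥ = 1 − χ` of the complement of the Fermi ball. -/
noncomputable def chiP {d : ℕ} (pF : ℝ) (p : Fin d → ℤ) : ℝ := 1 - chi pF p

/-- The profile of the mollified delta function: `δ₁(E) = (2/π)·sin²(E/2)/E²` for `E ≠ 0`,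
extended by its limit `1/(2π)` at `E = 0`. -/
noncomputable def delta1 (E : ℝ) : ℝ :=
  if E = 0 then 1 / (2 * π) else (2 / π) * (Real.sin (E / 2)) ^ 2 / E ^ 2

/-- The mollified delta function `δ_t(E) = t·δ₁(t·E)`. -/
noncomputable def deltaT (t E : ℝ) : ℝ := t * delta1 (t * E)

/-- The normalized convolution `(V̂⋆g)(q) = (2π)^{−d}·∑_k V̂(k)·g(q−k)`. -/
noncomputable def conv {d : ℕ} (Vh g : (Fin d → ℤ) → ℝ) (q : Fin d → ℤ) : ℝ :=
  ((2 * π) ^ d)⁻¹ * ∑' k : Fin d → ℤ, Vh k * g (q - k)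

/-- The `ℓ¹`-norm `‖V̂‖₁ = (2π)^{−d}·∑_k |V̂(k)|`. -/
noncomputable def VhatL1 {d : ℕ} (Vh : (Fin d → ℤ) → ℝ) : ℝ :=
  ((2 * π) ^ d)⁻¹ * ∑' k : Fin d → ℤ, |Vh k|

/-- The dispersion relation
`E_q = χ^⊥(q)·(|q|²/2 − (λ/2)·(V̂⋆χ)(q)) − χ(q)·(|q|²/2 + (λ/2)·(V̂⋆χ^⊥)(q))`. -/
noncomputable def disp {d : ℕ} (pF lam : ℝ) (Vh : (Fin d → ℤ) → ℝ) (q : Fin d → ℤ) : ℝ :=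
  chiP pF q * ((zNorm q) ^ 2 / 2 - (lam / 2) * conv Vh (chi pF) q)
    - chi pF q * ((zNorm q) ^ 2 / 2 + (lam / 2) * conv Vh (chiP pF) q)

/-- The mollified coefficient `α_t^H(h,k)` for holes. -/
noncomputable def alphaHt {d : ℕ} (pF lam t : ℝ) (Vh : (Fin d → ℤ) → ℝ)
    (h k : Fin d → ℤ) : ℝ :=
  chi pF h * chi pF (h + k) * ((2 * π) ^ d)⁻¹ *
    ∑' r : Fin d → ℤ, chi pF r * chiP pF (r + k) *
      deltaT t (disp pF lam Vh h - disp pF lam Vh (h + k)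
        - disp pF lam Vh r - disp pF lam Vh (r + k))

/-- The mollified coefficient `α_t^P(p,k)` for particles. -/
noncomputable def alphaPt {d : ℕ} (pF lam t : ℝ) (Vh : (Fin d → ℤ) → ℝ)
    (p k : Fin d → ℤ) : ℝ :=
  chiP pF p * chiP pF (p - k) * ((2 * π) ^ d)⁻¹ *
    ∑' r : Fin d → ℤ, chi pF r * chiP pF (r + k) *
      deltaT t (disp pF lam Vh p - disp pF lam Vh (p - k)
        - disp pF lam Vh r - disp pF lam Vh (r + k))

/-- The limiting coefficient `α^H(h,k)` for holes. -/
noncomputable def alphaH {d : ℕ} (pF : ℝ) (h k : Fin d → ℤ) : ℝ :=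
  (1 / (2 * π)) * chi pF h * chi pF (h + k) * ((2 * π) ^ d)⁻¹ *
    ∑' r : Fin d → ℤ, chi pF r * chiP pF (r + k) *
      (if (∑ i, r i * k i) = ∑ i, h i * k i then 1 else 0)

/-- The limiting coefficient `α^P(p,k)` for particles. -/
noncomputable def alphaP {d : ℕ} (pF : ℝ) (p k : Fin d → ℤ) : ℝ :=
  (1 / (2 * π)) * chiP pF p * chiP pF (p - k) * ((2 * π) ^ d)⁻¹ *
    ∑' r : Fin d → ℤ, chi pF r * chiP pF (r + k) *
      (if (∑ i, r i * k i) = ∑ i, (p i - k i) * k i then 1 else 0)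

/-- The mollified bosonized-interaction operator `B_t`. -/
noncomputable def Bt {d : ℕ} (pF lam t : ℝ) (Vh f : (Fin d → ℤ) → ℝ)
    (q : Fin d → ℤ) : ℝ :=
  2 * π * ((2 * π) ^ d)⁻¹ * ∑' k : Fin d → ℤ, (Vh k) ^ 2 *
    (alphaHt pF lam t Vh (q - k) k * f (q - k) * (1 - f q)
      - alphaHt pF lam t Vh q k * f q * (1 - f (q + k))
      + alphaPt pF lam t Vh (q + k) k * f (q + k) * (1 - f q)
      - alphaPt pF lam t Vh q k * f q * (1 - f (q - k)))

/-- The limiting bosonized-interaction operator `𝓑`. -/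
noncomputable def Blim {d : ℕ} (pF : ℝ) (Vh f : (Fin d → ℤ) → ℝ) (q : Fin d → ℤ) : ℝ :=
  2 * π * ((2 * π) ^ d)⁻¹ * ∑' k : Fin d → ℤ, (Vh k) ^ 2 *
    (alphaH pF (q - k) k * f (q - k) * (1 - f q)
      - alphaH pF q k * f q * (1 - f (q + k))
      + alphaP pF (q + k) k * f (q + k) * (1 - f q)
      - alphaP pF q k * f q * (1 - f (q - k)))

/-!
On the support of `α^H_t(h,k)` the energy argument of `δ_t` is the free one, the integer
`h·k − r·k`, shifted by the interaction by at most `ε = 2λ‖V̂‖₁ ≤ 1`; likewise for `α^P_t`.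
Within `ε` of an integer `n`, `δ_t` differs from `t/(2π)·[n = 0]` by
`O((ε²t³ + 1/t) / max(1, n²))`, which is summable over `n`, and for `k ≠ 0` each level set
`{r·k = s}` of the Fermi ball has at most `(2⌈p_F⌉ + 1)^{d−1}` points. Hence
`|α_t − t·α| = O(p_F^{d−1}(λ²t³ + 1/t))` uniformly, and summing the four gain and loss terms
against `V̂(k)²` gives the claim.
-/

open Finset

lemma one_sub_sq_div_six_le_sinc (x : ℝ) : 1 - x ^ 2 / 6 ≤ sinc x := by
  wlog hx : 0 ≤ x generalizing x
  · simpa [sinc_neg] using this (-x) (by linarith)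
  rcases hx.eq_or_lt with rfl | hx
  · simp
  rw [sinc_of_ne_zero hx.ne', le_div_iff₀ hx]
  nlinarith [sin_gt_sub_cube hx]

lemma one_sub_sinc_sq_le (x : ℝ) : 1 - sinc x ^ 2 ≤ x ^ 2 / 3 := by
  by_cases hx : x ^ 2 ≤ 3
  · nlinarith [one_sub_sq_div_six_le_sinc x]
  · nlinarith [sq_nonneg (sinc x)]

lemma delta1_eq_sinc_sq (x : ℝ) : delta1 x = sinc (x / 2) ^ 2 / (2 * π) := by
  rw [delta1]
  split_ifs with hx
  · simp [hx]
  · rw [sinc_of_ne_zero (div_ne_zero hx two_ne_zero)]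
    field_simp

lemma delta1_nonneg (x : ℝ) : 0 ≤ delta1 x := by
  rw [delta1_eq_sinc_sq]; positivity

lemma delta1_le (x : ℝ) : delta1 x ≤ 1 / (2 * π) := by
  rw [delta1_eq_sinc_sq]
  gcongr
  exact (sq_le_one_iff_abs_le_one _).2 (abs_sinc_le_one _)

lemma delta1_mul_sq_le (x : ℝ) : delta1 x * x ^ 2 ≤ 2 / π := by
  rw [delta1]
  split_ifs with hx
  · simp [hx]; positivity
  · rw [div_mul_cancel₀ _ (pow_ne_zero 2 hx)]
    exact mul_le_of_le_one_right (by positivity) (sin_sq_le_one _)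

lemma abs_delta1_sub_le (x : ℝ) : |delta1 x - 1 / (2 * π)| ≤ x ^ 2 := by
  have h₁ : 0 ≤ 1 - sinc (x / 2) ^ 2 :=
    sub_nonneg.2 ((sq_le_one_iff_abs_le_one _).2 (abs_sinc_le_one _))
  have h₂ := one_sub_sinc_sq_le (x / 2)
  rw [delta1_eq_sinc_sq, show sinc (x / 2) ^ 2 / (2 * π) - 1 / (2 * π)
      = -((1 - sinc (x / 2) ^ 2) / (2 * π)) by ring, abs_neg, abs_of_nonneg (by positivity),
    div_le_iff₀ (by positivity)]
  nlinarith [pi_gt_three, sq_nonneg x]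

lemma deltaT_nonneg {t : ℝ} (ht : 0 ≤ t) (E : ℝ) : 0 ≤ deltaT t E :=
  mul_nonneg ht (delta1_nonneg _)

noncomputable def invSqWeight (n : ℤ) : ℝ := (max 1 ((n : ℝ) ^ 2))⁻¹

lemma invSqWeight_nonneg (n : ℤ) : 0 ≤ invSqWeight n := by
  unfold invSqWeight; positivity

lemma invSqWeight_zero : invSqWeight 0 = 1 := by simp [invSqWeight]

lemma one_le_intCast_sq {n : ℤ} (hn : n ≠ 0) : 1 ≤ (n : ℝ) ^ 2 := by
  have : 1 ≤ n ^ 2 := by nlinarith [Int.one_le_abs hn, sq_abs n]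
  exact_mod_cast this

lemma invSqWeight_of_ne_zero {n : ℤ} (hn : n ≠ 0) : invSqWeight n = ((n : ℝ) ^ 2)⁻¹ := by
  rw [invSqWeight, max_eq_right (one_le_intCast_sq hn)]

lemma summable_invSqWeight : Summable invSqWeight := by
  refine Summable.of_norm_bounded_eventually
    ((summable_one_div_int_pow (p := 2)).2 one_lt_two) ?_
  filter_upwards [(Set.finite_singleton (0 : ℤ)).compl_mem_cofinite] with n hn
  rw [Real.norm_of_nonneg (invSqWeight_nonneg n), invSqWeight_of_ne_zero hn, one_div]

lemma abs_deltaT_sub_le {t ε E : ℝ} {n : ℤ} (ht : 0 < t) (hε : ε ≤ 1) (hE : |E - n| ≤ ε) :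
    |deltaT t E - t / (2 * π) * (if n = 0 then 1 else 0)|
      ≤ 4 * (ε ^ 2 * t ^ 3 + 1 / t) * invSqWeight n := by
  have hε0 : 0 ≤ ε := (abs_nonneg _).trans hE
  have hinv : 0 ≤ 1 / t := by positivity
  rcases eq_or_ne n 0 with rfl | hn
  · have hE' : E ^ 2 ≤ ε ^ 2 := by
      rw [← sq_abs]; simp only [Int.cast_zero, sub_zero] at hE; gcongr
    have h := abs_delta1_sub_le (t * E)
    rw [invSqWeight_zero, if_pos rfl, mul_one, deltaT,
      show t * delta1 (t * E) - t / (2 * π) = t * (delta1 (t * E) - 1 / (2 * π)) by ring,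
      abs_mul, abs_of_pos ht]
    calc t * |delta1 (t * E) - 1 / (2 * π)| ≤ t * (t * E) ^ 2 := by gcongr
      _ ≤ ε ^ 2 * t ^ 3 := by nlinarith [pow_pos ht 3]
      _ ≤ _ := by nlinarith [pow_pos ht 3]
  rw [if_neg hn, mul_zero, sub_zero, abs_of_nonneg (deltaT_nonneg ht.le E),
    invSqWeight_of_ne_zero hn, deltaT]
  have hn1 := one_le_intCast_sq hn
  rw [← div_eq_mul_inv, le_div_iff₀ (by positivity)]
  have hD0 := delta1_nonneg (t * E)
  have hnE : |(n : ℝ)| ≤ |E| + ε := by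
    have := abs_sub_abs_le_abs_sub (n : ℝ) E
    rw [abs_sub_comm] at this
    linarith
  rcases le_or_gt |(n : ℝ)| (2 * |E|) with hbig | hsmall
  · -- far from the resonance: the `1 / E²` tail of `δ₁`
    have hn2 : (n : ℝ) ^ 2 ≤ 4 * E ^ 2 := by
      rw [← sq_abs, ← sq_abs E]; nlinarith [abs_nonneg (n : ℝ)]
    have htail : t * (delta1 (t * E) * E ^ 2) ≤ 1 / t := by
      have := delta1_mul_sq_le (t * E)
      rw [le_div_iff₀ ht]
      nlinarith [pi_gt_three,
        div_le_one_of_le₀ (by linarith [pi_gt_three] : (2 : ℝ) ≤ π) pi_pos.le]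
    have := mul_le_mul_of_nonneg_left hn2 (mul_nonneg ht.le hD0)
    nlinarith [pow_pos ht 3, sq_nonneg ε]
  · -- near the resonance `n = ±1`, which forces `ε > 1/2`
    have hn2 : (n : ℝ) ^ 2 ≤ 4 * ε ^ 2 := by
      rw [← sq_abs]; nlinarith [abs_nonneg E, abs_nonneg (n : ℝ)]
    have hD : delta1 (t * E) ≤ 1 := (delta1_le _).trans (by
      rw [div_le_one (by positivity)]; linarith [pi_gt_three])
    have hAMGM : t ≤ t ^ 3 + 1 / t := by
      rw [← sub_nonneg]
      have : t ^ 3 + 1 / t - t = ((t ^ 2 - 1 / 2) ^ 2 + 3 / 4) / t := by field_simp; ring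
      rw [this]; positivity
    have hε2 : ε ^ 2 ≤ 1 := by nlinarith
    calc t * delta1 (t * E) * (n : ℝ) ^ 2 ≤ t * 1 * (4 * ε ^ 2) := by gcongr
      _ ≤ 4 * (ε ^ 2 * (t ^ 3 + 1 / t)) := by nlinarith
      _ ≤ 4 * (ε ^ 2 * t ^ 3 + 1 / t) := by nlinarith

lemma abs_sum_le_mul_tsum_of_card_fiber_le {α β : Type*} [DecidableEq β] {B : Finset α}
    {n : α → β} {w : α → ℝ} {ψ : β → ℝ} {M : ℕ} (hψ : ∀ b, 0 ≤ ψ b) (hψs : Summable ψ)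
    (hw : ∀ x ∈ B, |w x| ≤ ψ (n x)) (hM : ∀ b, #{x ∈ B | n x = b} ≤ M) :
    |∑ x ∈ B, w x| ≤ M * ∑' b, ψ b :=
  calc |∑ x ∈ B, w x| ≤ ∑ x ∈ B, ψ (n x) := (abs_sum_le_sum_abs _ _).trans (sum_le_sum hw)
    _ = ∑ b ∈ B.image n, #{x ∈ B | n x = b} • ψ b := sum_comp ψ n
    _ ≤ ∑ b ∈ B.image n, M * ψ b := sum_le_sum fun b _ => by
        rw [nsmul_eq_mul]; gcongr; exacts [hψ b, hM b]
    _ = M * ∑ b ∈ B.image n, ψ b := (mul_sum _ _ _).symm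
    _ ≤ M * ∑' b, ψ b := by gcongr; exact hψs.sum_le_tsum _ fun b _ => hψ b

section Lattice

variable {d : ℕ}

lemma sq_zNorm (x : Fin d → ℤ) : zNorm x ^ 2 = ∑ i, ((x i : ℝ)) ^ 2 :=
  sq_sqrt (sum_nonneg fun _ _ => sq_nonneg _)

lemma abs_apply_le_zNorm (x : Fin d → ℤ) (i : Fin d) : |(x i : ℝ)| ≤ zNorm x := by
  rw [← sqrt_sq_eq_abs]
  exact sqrt_le_sqrt (single_le_sum (fun j _ => sq_nonneg ((x j : ℝ))) (mem_univ i))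

lemma zNorm_add_sq (x k : Fin d → ℤ) :
    zNorm (x + k) ^ 2 = zNorm x ^ 2 + 2 * ((∑ i, x i * k i : ℤ) : ℝ) + zNorm k ^ 2 := by
  simp only [sq_zNorm, Pi.add_apply, Int.cast_add, Int.cast_sum, Int.cast_mul, add_sq,
    sum_add_distrib, mul_sum, mul_assoc]

noncomputable def cube (d m : ℕ) : Finset (Fin d → ℤ) :=
  Fintype.piFinset fun _ => Icc (-(m : ℤ)) m

lemma mem_cube_of_zNorm_le {R : ℝ} {x : Fin d → ℤ} (h : zNorm x ≤ R) : x ∈ cube d ⌈R⌉₊ := by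
  refine Fintype.mem_piFinset.2 fun i => mem_Icc.2 (abs_le.1 ?_)
  have : (|x i| : ℝ) ≤ ⌈R⌉₊ := (abs_apply_le_zNorm x i).trans (h.trans (Nat.le_ceil R))
  exact_mod_cast this

lemma hasFiniteSupport_of_eq_zero_of_lt_zNorm {g : (Fin d → ℤ) → ℝ} {R : ℝ}
    (h : ∀ k, R < zNorm k → g k = 0) : g.HasFiniteSupport :=
  (cube d ⌈R⌉₊).finite_toSet.subset fun k hk =>
    mem_cube_of_zNorm_le (not_lt.1 (mt (h k) hk))

lemma card_filter_cube_dot_eq_le {k : Fin d → ℤ} (hk : k ≠ 0) (m : ℕ) (s : ℤ) :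
    #{x ∈ cube d m | ∑ i, x i * k i = s} ≤ (2 * m + 1) ^ (d - 1) := by
  classical
  obtain ⟨i₀, hi₀⟩ : ∃ i, k i ≠ 0 := Function.ne_iff.1 hk
  -- forgetting the coordinate `i₀` is injective on a level set of `x ↦ x · k`
  let T := Fintype.piFinset (Function.update (fun _ => Icc (-(m : ℤ)) m) i₀ {0})
  have hT : #T = (2 * m + 1) ^ (d - 1) := by
    rw [Fintype.card_piFinset, Fintype.prod_eq_mul_prod_compl i₀, Function.update_self,
      card_singleton, one_mul, prod_congr rfl (g := fun _ => 2 * m + 1) fun i hi => by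
        rw [Function.update_of_ne (by simpa using hi), Int.card_Icc]; omega,
      prod_const, card_compl, Fintype.card_fin, card_singleton]
  refine hT ▸ card_le_card_of_injOn (fun x => Function.update x i₀ 0) (fun x hx => ?_) ?_
  · simp only [coe_filter, Set.mem_ofPred_eq, cube, Fintype.mem_piFinset] at hx
    refine Fintype.mem_piFinset.2 fun i => ?_
    by_cases hi : i = i₀
    · subst hi; simp
    · simpa [Function.update_of_ne hi] using hx.1 i
  · intro x hx y hy hxy
    simp only [coe_filter, Set.mem_ofPred_eq] at hx hy
    have hoff : ∀ i, i ≠ i₀ → x i = y i := fun i hi => by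
      simpa [Function.update_of_ne hi] using congrFun hxy i
    have hdot : ∑ i, (x i - y i) * k i = (x i₀ - y i₀) * k i₀ :=
      sum_eq_single i₀ (fun i _ hi => by rw [hoff i hi, sub_self, zero_mul]) (by simp)
    have hzero : (x i₀ - y i₀) * k i₀ = 0 := by
      rw [← hdot]; simp only [sub_mul, sum_sub_distrib, hx.2, hy.2, sub_self]
    funext i
    by_cases hi : i = i₀
    · subst hi; linarith [(mul_eq_zero.1 hzero).resolve_right hi₀]
    · exact hoff i hi

end Lattice

section Coefficients

variable {d : ℕ} {pF lam t : ℝ} {Vh : (Fin d → ℤ) → ℝ}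

lemma chi_of_le {p : Fin d → ℤ} (h : zNorm p ≤ pF) : chi pF p = 1 := if_pos h

lemma chi_of_lt {p : Fin d → ℤ} (h : pF < zNorm p) : chi pF p = 0 := if_neg h.not_ge

lemma chiP_of_le {p : Fin d → ℤ} (h : zNorm p ≤ pF) : chiP pF p = 0 := by
  rw [chiP, chi_of_le h, sub_self]

lemma chiP_of_lt {p : Fin d → ℤ} (h : pF < zNorm p) : chiP pF p = 1 := by
  rw [chiP, chi_of_lt h, sub_zero]

lemma abs_chi_le_one (pF : ℝ) (p : Fin d → ℤ) : |chi pF p| ≤ 1 := by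
  unfold chi; split_ifs <;> norm_num

lemma abs_chiP_le_one (pF : ℝ) (p : Fin d → ℤ) : |chiP pF p| ≤ 1 := by
  unfold chiP chi; split_ifs <;> norm_num

lemma VhatL1_nonneg (Vh : (Fin d → ℤ) → ℝ) : 0 ≤ VhatL1 Vh :=
  mul_nonneg (by positivity) (tsum_nonneg fun _ => abs_nonneg _)

lemma abs_conv_le {g : (Fin d → ℤ) → ℝ} (hV : Summable Vh) (hg : ∀ x, |g x| ≤ 1)
    (q : Fin d → ℤ) : |conv Vh g q| ≤ VhatL1 Vh := by
  have hle : ∀ k, ‖Vh k * g (q - k)‖ ≤ |Vh k| := fun k => by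
    rw [Real.norm_eq_abs, abs_mul]; exact mul_le_of_le_one_right (abs_nonneg _) (hg _)
  have hs : Summable fun k => ‖Vh k * g (q - k)‖ :=
    hV.abs.of_nonneg_of_le (fun _ => norm_nonneg _) hle
  rw [conv, VhatL1, abs_mul, abs_of_pos (by positivity)]
  gcongr
  exact (norm_tsum_le_tsum_norm hs).trans (hs.tsum_le_tsum hle hV.abs)

/-- The free dispersion `e(q)` of the informal statement. -/
noncomputable def freeDisp (pF : ℝ) (q : Fin d → ℤ) : ℝ :=
  (chiP pF q - chi pF q) * zNorm q ^ 2 / 2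

lemma freeDisp_of_le {q : Fin d → ℤ} (h : zNorm q ≤ pF) :
    freeDisp pF q = -(zNorm q ^ 2 / 2) := by
  rw [freeDisp, chi_of_le h, chiP_of_le h]; ring

lemma freeDisp_of_lt {q : Fin d → ℤ} (h : pF < zNorm q) : freeDisp pF q = zNorm q ^ 2 / 2 := by
  rw [freeDisp, chi_of_lt h, chiP_of_lt h]; ring

lemma abs_disp_sub_freeDisp_le (hV : Summable Vh) (hlam : 0 ≤ lam) (q : Fin d → ℤ) :
    |disp pF lam Vh q - freeDisp pF q| ≤ lam / 2 * VhatL1 Vh := by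
  rcases le_or_gt (zNorm q) pF with hq | hq
  · have : disp pF lam Vh q - freeDisp pF q = -(lam / 2 * conv Vh (chiP pF) q) := by
      rw [disp, freeDisp, chi_of_le hq, chiP_of_le hq]; ring
    rw [this, abs_neg, abs_mul, abs_of_nonneg (by positivity)]
    gcongr
    exact abs_conv_le hV (abs_chiP_le_one pF) q
  · have : disp pF lam Vh q - freeDisp pF q = -(lam / 2 * conv Vh (chi pF) q) := by
      rw [disp, freeDisp, chi_of_lt hq, chiP_of_lt hq]; ring
    rw [this, abs_neg, abs_mul, abs_of_nonneg (by positivity)]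
    gcongr
    exact abs_conv_le hV (abs_chi_le_one pF) q

lemma abs_holeEnergy_sub_le (hV : Summable Vh) (hlam : 0 ≤ lam) {h k r : Fin d → ℤ}
    (hh : zNorm h ≤ pF) (hhk : zNorm (h + k) ≤ pF) (hr : zNorm r ≤ pF)
    (hrk : pF < zNorm (r + k)) :
    |disp pF lam Vh h - disp pF lam Vh (h + k) - disp pF lam Vh r - disp pF lam Vh (r + k)
      - ((∑ i, h i * k i - ∑ i, r i * k i : ℤ) : ℝ)| ≤ 2 * lam * VhatL1 Vh := by
  have e := fun q => abs_le.1 (abs_disp_sub_freeDisp_le (pF := pF) hV hlam q)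
  have e₁ := e h; have e₂ := e (h + k); have e₃ := e r; have e₄ := e (r + k)
  rw [freeDisp_of_le hh] at e₁
  rw [freeDisp_of_le hhk, zNorm_add_sq] at e₂
  rw [freeDisp_of_le hr] at e₃
  rw [freeDisp_of_lt hrk, zNorm_add_sq] at e₄
  rw [Int.cast_sub, abs_le]
  constructor <;> linarith [e₁.1, e₁.2, e₂.1, e₂.2, e₃.1, e₃.2, e₄.1, e₄.2]

lemma abs_particleEnergy_sub_le (hV : Summable Vh) (hlam : 0 ≤ lam) {p k r : Fin d → ℤ}
    (hp : pF < zNorm p) (hpk : pF < zNorm (p - k)) (hr : zNorm r ≤ pF)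
    (hrk : pF < zNorm (r + k)) :
    |disp pF lam Vh p - disp pF lam Vh (p - k) - disp pF lam Vh r - disp pF lam Vh (r + k)
      - ((∑ i, (p i - k i) * k i - ∑ i, r i * k i : ℤ) : ℝ)| ≤ 2 * lam * VhatL1 Vh := by
  have e := fun q => abs_le.1 (abs_disp_sub_freeDisp_le (pF := pF) hV hlam q)
  have e₁ := e p; have e₂ := e (p - k); have e₃ := e r; have e₄ := e (r + k)
  have hpsq := zNorm_add_sq (p - k) k
  rw [sub_add_cancel] at hpsq
  simp only [Pi.sub_apply] at hpsq
  rw [freeDisp_of_lt hp, hpsq] at e₁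
  rw [freeDisp_of_lt hpk] at e₂
  rw [freeDisp_of_le hr] at e₃
  rw [freeDisp_of_lt hrk, zNorm_add_sq] at e₄
  rw [Int.cast_sub, abs_le]
  constructor <;> linarith [e₁.1, e₁.2, e₂.1, e₂.2, e₃.1, e₃.2, e₄.1, e₄.2]

lemma abs_tsum_deltaT_sub_tsum_resonant_le {ε a : ℝ} {E : (Fin d → ℤ) → ℝ} {k : Fin d → ℤ}
    {s : ℤ} (hk : k ≠ 0) (ht : 0 < t) (hε : ε ≤ 1)
    (hE : ∀ r, zNorm r ≤ pF → pF < zNorm (r + k) →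
      |a - E r - E (r + k) - ((s - ∑ i, r i * k i : ℤ) : ℝ)| ≤ ε) :
    |∑' r, chi pF r * chiP pF (r + k) * deltaT t (a - E r - E (r + k))
      - t / (2 * π) * ∑' r, chi pF r * chiP pF (r + k) *
          (if ∑ i, r i * k i = s then 1 else 0)|
      ≤ (2 * ⌈pF⌉₊ + 1 : ℝ) ^ (d - 1) * (4 * (ε ^ 2 * t ^ 3 + 1 / t) * ∑' n, invSqWeight n) := by
  have hB : ∀ r ∉ cube d ⌈pF⌉₊, chi pF r = 0 := fun r hr =>
    chi_of_lt (not_le.1 (mt mem_cube_of_zNorm_le hr))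
  have hc : 0 ≤ 4 * (ε ^ 2 * t ^ 3 + 1 / t) := by positivity
  rw [tsum_eq_sum (s := cube d ⌈pF⌉₊) fun r hr => by rw [hB r hr, zero_mul, zero_mul],
    tsum_eq_sum (s := cube d ⌈pF⌉₊) fun r hr => by rw [hB r hr, zero_mul, zero_mul],
    mul_sum, ← sum_sub_distrib, ← tsum_mul_left]
  have hcard : (((2 * ⌈pF⌉₊ + 1) ^ (d - 1) : ℕ) : ℝ) = (2 * ⌈pF⌉₊ + 1 : ℝ) ^ (d - 1) := by
    push_cast; ring
  rw [← hcard]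
  -- group the `r` by the integer `s − r·k` that the energy argument is close to
  refine abs_sum_le_mul_tsum_of_card_fiber_le (n := fun r => s - ∑ i, r i * k i)
    (fun n => mul_nonneg hc (invSqWeight_nonneg n)) (summable_invSqWeight.mul_left _) ?_ ?_
  · intro r _
    rcases le_or_gt (zNorm r) pF with hr | hr
    · rcases le_or_gt (zNorm (r + k)) pF with hrk | hrk
      · simpa [chiP_of_le hrk] using mul_nonneg hc (invSqWeight_nonneg _)
      · rw [chi_of_le hr, chiP_of_lt hrk, one_mul, one_mul, one_mul]
        simpa [sub_eq_zero, eq_comm (a := (0 : ℤ)), eq_comm (a := s)] using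
          abs_deltaT_sub_le ht hε (hE r hr hrk)
    · simpa [chi_of_lt hr] using mul_nonneg hc (invSqWeight_nonneg _)
  · intro b
    calc #{r ∈ cube d ⌈pF⌉₊ | s - ∑ i, r i * k i = b}
        = #{r ∈ cube d ⌈pF⌉₊ | ∑ i, r i * k i = s - b} :=
          congrArg card (filter_congr fun r _ => by omega)
      _ ≤ _ := card_filter_cube_dot_eq_le hk _ _

/-- `ε` bounds the shift of the energy arguments of `δ_t` away from the integers. -/
noncomputable def alphaErrBound (d : ℕ) (pF ε t : ℝ) : ℝ :=
  ((2 * π) ^ d)⁻¹ *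
    ((2 * ⌈pF⌉₊ + 1 : ℝ) ^ (d - 1) * (4 * (ε ^ 2 * t ^ 3 + 1 / t) * ∑' n, invSqWeight n))

lemma alphaErrBound_nonneg (d : ℕ) (pF ε : ℝ) (ht : 0 < t) : 0 ≤ alphaErrBound d pF ε t := by
  have : 0 ≤ ∑' n, invSqWeight n := tsum_nonneg invSqWeight_nonneg
  unfold alphaErrBound; positivity

lemma abs_alphaHt_sub_le (hV : Summable Vh) (hlam : 0 ≤ lam) (hsmall : lam * VhatL1 Vh ≤ 1 / 2)
    (ht : 0 < t) (h : Fin d → ℤ) {k : Fin d → ℤ} (hk : k ≠ 0) :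
    |alphaHt pF lam t Vh h k - t * alphaH pF h k|
      ≤ alphaErrBound d pF (2 * lam * VhatL1 Vh) t := by
  by_cases hin : zNorm h ≤ pF ∧ zNorm (h + k) ≤ pF
  · have key := abs_tsum_deltaT_sub_tsum_resonant_le
      (E := disp pF lam Vh) (a := disp pF lam Vh h - disp pF lam Vh (h + k))
      (s := ∑ i, h i * k i) hk ht
      (by linarith) fun r hr hrk => abs_holeEnergy_sub_le hV hlam hin.1 hin.2 hr hrk
    rw [alphaErrBound]
    refine Eq.trans_le ?_ (mul_le_mul_of_nonneg_left key (by positivity))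
    rw [← abs_of_pos (by positivity : (0 : ℝ) < ((2 * π) ^ d)⁻¹), ← abs_mul, alphaHt, alphaH,
      chi_of_le hin.1, chi_of_le hin.2]
    congr 1
    ring
  · have hzero : chi pF h * chi pF (h + k) = 0 := by
      rcases not_and_or.1 hin with hh | hh
      · rw [chi_of_lt (not_le.1 hh), zero_mul]
      · rw [chi_of_lt (not_le.1 hh), mul_zero]
    rw [alphaHt, alphaH, mul_assoc (1 / (2 * π)), hzero]
    simpa using alphaErrBound_nonneg d pF _ ht

lemma abs_alphaPt_sub_le (hV : Summable Vh) (hlam : 0 ≤ lam) (hsmall : lam * VhatL1 Vh ≤ 1 / 2)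
    (ht : 0 < t) (p : Fin d → ℤ) {k : Fin d → ℤ} (hk : k ≠ 0) :
    |alphaPt pF lam t Vh p k - t * alphaP pF p k|
      ≤ alphaErrBound d pF (2 * lam * VhatL1 Vh) t := by
  by_cases hout : pF < zNorm p ∧ pF < zNorm (p - k)
  · have key := abs_tsum_deltaT_sub_tsum_resonant_le
      (E := disp pF lam Vh) (a := disp pF lam Vh p - disp pF lam Vh (p - k))
      (s := ∑ i, (p i - k i) * k i) hk ht
      (by linarith) fun r hr hrk => abs_particleEnergy_sub_le hV hlam hout.1 hout.2 hr hrk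
    rw [alphaErrBound]
    refine Eq.trans_le ?_ (mul_le_mul_of_nonneg_left key (by positivity))
    rw [← abs_of_pos (by positivity : (0 : ℝ) < ((2 * π) ^ d)⁻¹), ← abs_mul, alphaPt, alphaP,
      chiP_of_lt hout.1, chiP_of_lt hout.2]
    congr 1
    ring
  · have hzero : chiP pF p * chiP pF (p - k) = 0 := by
      rcases not_and_or.1 hout with hp | hp
      · rw [chiP_of_le (not_lt.1 hp), zero_mul]
      · rw [chiP_of_le (not_lt.1 hp), mul_zero]
    rw [alphaPt, alphaP, mul_assoc (1 / (2 * π)), hzero]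
    simpa using alphaErrBound_nonneg d pF _ ht

end Coefficients

lemma summable_sq_mul {ι : Type*} {V : ι → ℝ} (hV : V.HasFiniteSupport) (g : ι → ℝ) :
    Summable fun k => V k ^ 2 * g k :=
  summable_of_hasFiniteSupport <| hV.subset fun _ hk =>
    (pow_ne_zero_iff two_ne_zero).1 (left_ne_zero_of_mul hk)

section Collision

variable {Λ : Type*} [AddCommGroup Λ] {aH aP bH bP : Λ → Λ → ℝ} {V f : Λ → ℝ}

def collisionTerm (aH aP : Λ → Λ → ℝ) (f : Λ → ℝ) (q k : Λ) : ℝ :=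
  aH (q - k) k * f (q - k) * (1 - f q) - aH q k * f q * (1 - f (q + k))
    + aP (q + k) k * f (q + k) * (1 - f q) - aP q k * f q * (1 - f (q - k))

noncomputable def collisionSum (aH aP : Λ → Λ → ℝ) (V f : Λ → ℝ) (q : Λ) : ℝ :=
  ∑' k, V k ^ 2 * collisionTerm aH aP f q k

lemma collisionSum_sub_mul (hV : V.HasFiniteSupport) (t : ℝ) (q : Λ) :
    collisionSum aH aP V f q - t * collisionSum bH bP V f q
      = collisionSum (fun h k => aH h k - t * bH h k) (fun p k => aP p k - t * bP p k)
          V f q := by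
  rw [collisionSum, collisionSum, ← tsum_mul_left,
    ← (summable_sq_mul hV _).tsum_sub ((summable_sq_mul hV _).mul_left t)]
  congr 1
  funext k
  simp only [collisionTerm]
  ring

lemma abs_collisionTerm_le {A F G : ℝ} {k : Λ} (hH : ∀ h, |aH h k| ≤ A)
    (hP : ∀ p, |aP p k| ≤ A) (hf : ∀ p, |f p| ≤ F) (hg : ∀ p, |1 - f p| ≤ G) (q : Λ) :
    |collisionTerm aH aP f q k| ≤ 4 * (A * F * G) := by
  have hA : 0 ≤ A := (abs_nonneg _).trans (hH q)
  have hF : 0 ≤ F := (abs_nonneg _).trans (hf q)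
  have term : ∀ a x y, |a| ≤ A → |a * f x * (1 - f y)| ≤ A * F * G := fun a x y ha => by
    rw [abs_mul, abs_mul]
    exact mul_le_mul (mul_le_mul ha (hf x) (abs_nonneg _) hA) (hg y) (abs_nonneg _)
      (mul_nonneg hA hF)
  have e₁ := abs_le.1 (term _ (q - k) q (hH (q - k)))
  have e₂ := abs_le.1 (term _ q (q + k) (hH q))
  have e₃ := abs_le.1 (term _ (q + k) q (hP (q + k)))
  have e₄ := abs_le.1 (term _ q (q - k) (hP q))
  rw [collisionTerm, abs_le]
  constructor <;> linarith [e₁.1, e₁.2, e₂.1, e₂.2, e₃.1, e₃.2, e₄.1, e₄.2]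

lemma abs_collisionSum_le {A F G : ℝ} (hV : V.HasFiniteSupport) (hV0 : V 0 = 0)
    (hH : ∀ h k, k ≠ 0 → |aH h k| ≤ A) (hP : ∀ p k, k ≠ 0 → |aP p k| ≤ A)
    (hf : ∀ p, |f p| ≤ F) (hg : ∀ p, |1 - f p| ≤ G) (q : Λ) :
    |collisionSum aH aP V f q| ≤ (∑' k, V k ^ 2) * (4 * (A * F * G)) := by
  have hterm : ∀ k,
      ‖V k ^ 2 * collisionTerm aH aP f q k‖ ≤ V k ^ 2 * (4 * (A * F * G)) := by
    intro k
    rcases eq_or_ne k 0 with rfl | hk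
    · simp [hV0]
    rw [Real.norm_eq_abs, abs_mul, abs_of_nonneg (sq_nonneg _)]
    gcongr
    exact abs_collisionTerm_le (fun h => hH h k hk) (fun p => hP p k hk) hf hg q
  rw [collisionSum, ← tsum_mul_right]
  have hs := summable_sq_mul hV (collisionTerm aH aP f q)
  exact (norm_tsum_le_tsum_norm hs.norm).trans
    (hs.norm.tsum_le_tsum hterm (summable_sq_mul hV _))

end Collision

lemma le_ciSup_abs_of_le {ι : Type*} {g : ι → ℝ} {M : ℝ} (hM : ∀ i, |g i| ≤ M) (i : ι) :
    |g i| ≤ ⨆ i, |g i| :=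
  le_ciSup ⟨M, Set.forall_mem_range.2 hM⟩ i

section Main

variable {d : ℕ} {pF lam t : ℝ} {Vh : (Fin d → ℤ) → ℝ}

lemma Bt_eq_collisionSum (f : (Fin d → ℤ) → ℝ) (q : Fin d → ℤ) :
    Bt pF lam t Vh f q
      = 2 * π * ((2 * π) ^ d)⁻¹
          * collisionSum (alphaHt pF lam t Vh) (alphaPt pF lam t Vh) Vh f q :=
  rfl

lemma Blim_eq_collisionSum (f : (Fin d → ℤ) → ℝ) (q : Fin d → ℤ) :
    Blim pF Vh f q = 2 * π * ((2 * π) ^ d)⁻¹ * collisionSum (alphaH pF) (alphaP pF) Vh f q :=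
  rfl

lemma alphaErrBound_le {a N : ℝ} (ha : 0 ≤ a) (haN : a ≤ N) (hpF : 1 ≤ pF) (ht : 0 < t) :
    alphaErrBound d pF (2 * lam * a) t
      ≤ ((2 * π) ^ d)⁻¹ * 5 ^ (d - 1) * 4 * (4 * N ^ 2 + 1) * (∑' n, invSqWeight n)
          * (t * (1 / t ^ 2 + (lam * t) ^ 2) * pF ^ (d - 1)) := by
  have hZ : 0 ≤ ∑' n, invSqWeight n := tsum_nonneg invSqWeight_nonneg
  have hcount : (2 * ⌈pF⌉₊ + 1 : ℝ) ^ (d - 1) ≤ 5 ^ (d - 1) * pF ^ (d - 1) := by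
    rw [← mul_pow]
    gcongr
    linarith [Nat.ceil_lt_add_one (zero_le_one.trans hpF)]
  have hε : (2 * lam * a) ^ 2 * t ^ 3 + 1 / t
      ≤ (4 * N ^ 2 + 1) * (t * (1 / t ^ 2 + (lam * t) ^ 2)) := by
    have : t * (1 / t ^ 2 + (lam * t) ^ 2) = lam ^ 2 * t ^ 3 + 1 / t := by field_simp; ring
    have ha2 : a ^ 2 ≤ N ^ 2 := by gcongr
    rw [this]
    nlinarith [mul_le_mul_of_nonneg_left ha2 (by positivity : 0 ≤ 4 * lam ^ 2 * t ^ 3),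
      pow_pos ht 3, one_div_pos.2 ht, sq_nonneg N, sq_nonneg lam]
  calc alphaErrBound d pF (2 * lam * a) t
      ≤ ((2 * π) ^ d)⁻¹ * ((5 ^ (d - 1) * pF ^ (d - 1))
          * (4 * ((4 * N ^ 2 + 1) * (t * (1 / t ^ 2 + (lam * t) ^ 2)))
            * ∑' n, invSqWeight n)) := by
        unfold alphaErrBound; gcongr
    _ = _ := by ring

lemma abs_Bt_sub_mul_Blim_le {f : (Fin d → ℤ) → ℝ} {F G : ℝ} (hV : Vh.HasFiniteSupport)
    (hV0 : Vh 0 = 0) (hlam : 0 ≤ lam) (hsmall : lam * VhatL1 Vh ≤ 1 / 2) (ht : 0 < t)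
    (hf : ∀ p, |f p| ≤ F) (hg : ∀ p, |1 - f p| ≤ G) (q : Fin d → ℤ) :
    |Bt pF lam t Vh f q - t * Blim pF Vh f q|
      ≤ 2 * π * ((2 * π) ^ d)⁻¹
          * ((∑' k, Vh k ^ 2) * (4 * (alphaErrBound d pF (2 * lam * VhatL1 Vh) t * F * G))) := by
  have hVs : Summable Vh := summable_of_hasFiniteSupport hV
  rw [Bt_eq_collisionSum, Blim_eq_collisionSum, mul_left_comm t, ← mul_sub,
    collisionSum_sub_mul hV, abs_mul, abs_of_pos (by positivity)]
  gcongr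
  exact abs_collisionSum_le hV hV0 (fun h k hk => abs_alphaHt_sub_le hVs hlam hsmall ht h hk)
    (fun p k hk => abs_alphaPt_sub_le hVs hlam hsmall ht p hk) hf hg q

end Main

theorem stmt12_general (d : ℕ) (N1 S : ℝ) :
    ∃ C : ℝ, 0 < C ∧
      ∀ r : ℝ, 0 < r → ∀ Vh : (Fin d → ℤ) → ℝ,
        (∀ k, r < zNorm k → Vh k = 0) → (∀ k, Vh (-k) = Vh k) → Vh 0 = 0 →
        VhatL1 Vh ≤ N1 → (∑' k : Fin d → ℤ, (Vh k) ^ 2) ≤ S →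
        ∀ lam : ℝ, 0 < lam → lam * VhatL1 Vh ≤ 1 / 2 →
        ∀ pF : ℝ, 1 ≤ pF →
        ∀ f : (Fin d → ℤ) → ℝ, (∃ M, ∀ p, |f p| ≤ M) →
        ∀ t : ℝ, 0 < t →
        ∀ q : Fin d → ℤ,
          |Bt pF lam t Vh f q - t * Blim pF Vh f q|
            ≤ C * t * (1 / t ^ 2 + (lam * t) ^ 2) * pF ^ (d - 1) *
              (⨆ p, |1 - f p|) * (⨆ p, |f p|) := by
  set K := ((2 * π) ^ d)⁻¹ * 5 ^ (d - 1) * 4 * (4 * N1 ^ 2 + 1) * ∑' n, invSqWeight n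
  have hK : 0 < K := by
    have := summable_invSqWeight.tsum_pos invSqWeight_nonneg 0 (by simp [invSqWeight_zero])
    positivity
  refine ⟨2 * π * ((2 * π) ^ d)⁻¹ * max S 1 * 4 * K, by positivity, ?_⟩
  intro r _ Vh hsupp _ hV0 hN1 hS lam hlam hsmall pF hpF f hf t ht q
  obtain ⟨M, hM⟩ := hf
  have hF : ∀ p, |f p| ≤ ⨆ p, |f p| := le_ciSup_abs_of_le hM
  have hG : ∀ p, |1 - f p| ≤ ⨆ p, |1 - f p| := le_ciSup_abs_of_le fun p =>
    (abs_sub _ _).trans (add_le_add (abs_one.le) (hM p))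
  have hA := alphaErrBound_le (VhatL1_nonneg Vh) hN1 hpF ht (d := d) (lam := lam)
  have hA0 := alphaErrBound_nonneg d pF (2 * lam * VhatL1 Vh) ht
  have hF0 := (abs_nonneg _).trans (hF q)
  have hG0 := (abs_nonneg _).trans (hG q)
  calc |Bt pF lam t Vh f q - t * Blim pF Vh f q|
      ≤ 2 * π * ((2 * π) ^ d)⁻¹ * ((∑' k, Vh k ^ 2)
          * (4 * (alphaErrBound d pF (2 * lam * VhatL1 Vh) t * (⨆ p, |f p|) * ⨆ p, |1 - f p|))) :=
        abs_Bt_sub_mul_Blim_le (hasFiniteSupport_of_eq_zero_of_lt_zNorm hsupp) hV0 hlam.le hsmall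
          ht hF hG q
    _ ≤ 2 * π * ((2 * π) ^ d)⁻¹ * (max S 1
          * (4 * (K * (t * (1 / t ^ 2 + (lam * t) ^ 2) * pF ^ (d - 1)) * (⨆ p, |f p|)
            * ⨆ p, |1 - f p|))) := by
        gcongr
        exact hS.trans (le_max_left _ _)
    _ = _ := by ring

/-- Comparison of `B_t` and `t·𝓑`: there is `C > 0`, depending only on `d`, an upper bound
`N₁` for `‖V̂‖₁` and an upper bound `S` for `∑ V̂(k)²`, such that for every admissible `V̂`,
any `λ > 0` with `λ·‖V̂‖₁ ≤ 1/2`, any `p_F ≥ 1`, any bounded `f` and any `t > 0`,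
`sup_q |B_t[f](q) − t·𝓑[f](q)|
  ≤ C·t·(1/t² + (λt)²)·p_F^{d−1}·(sup|1−f|)·(sup|f|)`. -/
theorem stmt12 (d : ℕ) (hd : 1 ≤ d) (N1 S : ℝ) :
    ∃ C : ℝ, 0 < C ∧
      ∀ r : ℝ, 0 < r → ∀ Vh : (Fin d → ℤ) → ℝ,
        (∀ k, r < zNorm k → Vh k = 0) → (∀ k, Vh (-k) = Vh k) → Vh 0 = 0 →
        VhatL1 Vh ≤ N1 → (∑' k : Fin d → ℤ, (Vh k) ^ 2) ≤ S →
        ∀ lam : ℝ, 0 < lam → lam * VhatL1 Vh ≤ 1 / 2 →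
        ∀ pF : ℝ, 1 ≤ pF →
        ∀ f : (Fin d → ℤ) → ℝ, (∃ M, ∀ p, |f p| ≤ M) →
        ∀ t : ℝ, 0 < t →
        ∀ q : Fin d → ℤ,
          |Bt pF lam t Vh f q - t * Blim pF Vh f q|
            ≤ C * t * (1 / t ^ 2 + (lam * t) ^ 2) * pF ^ (d - 1) *
              (⨆ p, |1 - f p|) * (⨆ p, |f p|) :=
  stmt12_general d N1 S
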